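/- arXiv:2309.01583 — 2 statements merged into one kernel-verified Lean document; each statement's English description precedes it below -/
import Mathlib

section
/- For every integer r ≥ 1, the marking number of the Turán graph T(r²,r) (the complete r-partite graph on r² vertices with all parts of size r) satisfies m(T(r²,r)) ≥ r(r−1). -/
open Function

namespace GameCol

variable {V : Type*} [Fintype V] [DecidableEq V]

/-- A finite set of vertices is independent in `G`. -/
def IsIndepF (G : SimpleGraph V) (s : Finset V) : Prop :=
  ∀ u ∈ s, ∀ v ∈ s, ¬ G.Adj u v

/-! ### The vertex colouring game.

A position is a partial proper colouring `f : V → Option ℕ` (`none` = uncoloured);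
the palette consists of the `k` colours `0, …, k-1`.  The `Bool` records whose turn
it is (`true` = Maker).  Players alternate, Maker moving first, always making a legal
move if one exists; the game ends when the player to move has no legal move, and
Maker wins if and only if the whole graph is then coloured. -/

/-- Colour `c` may legally be played at `v`. -/
def ColLegal (G : SimpleGraph V) (k : ℕ) (f : V → Option ℕ) (v : V) (c : ℕ) : Prop :=
  c < k ∧ f v = none ∧ ∀ u, G.Adj v u → f u ≠ some c

/-- Every vertex is coloured. -/
def FullC (f : V → Option ℕ) : Prop := ∀ v, f v ≠ none

/-- Maker wins the vertex colouring game from the given position with optimal play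
(`fuel` is an upper bound on the number of remaining moves). -/
def MakerWinsC (G : SimpleGraph V) (k : ℕ) : ℕ → (V → Option ℕ) → Bool → Prop
  | 0, f, _ => FullC f
  | fuel + 1, f, true => FullC f ∨
      ∃ v c, ColLegal G k f v c ∧ MakerWinsC G k fuel (update f v (some c)) false
  | fuel + 1, f, false => FullC f ∨
      ((∃ v c, ColLegal G k f v c) ∧
        ∀ v c, ColLegal G k f v c → MakerWinsC G k fuel (update f v (some c)) true)

/-- The game chromatic number `χ_g(G)`: the least number of colours for which Maker
has a winning strategy in the vertex colouring game. -/
noncomputable def gameChromaticNumber (G : SimpleGraph V) : ℕ :=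
  sInf {k | MakerWinsC G k (Fintype.card V) (fun _ => none) true}

/-! ### The vertex colouring game with blanks.

Positions are `f : V → Option (Option ℕ)`: `none` = unplayed, `some none` = blank,
`some (some c)` = coloured with colour `c`.  The palette is a finite set `K ⊆ ℕ` of
colours.  On her turn Maker must play a colour; on his turn Breaker may play a colour,
or a blank at any unplayed vertex.  The game ends as soon as no vertex can legally
receive a colour, and Maker wins iff every vertex is then coloured or blank. -/

/-- Colour `c` may legally be played at `v` (blanks put no restriction on their
neighbours). -/
def BColLegal (G : SimpleGraph V) (K : Finset ℕ) (f : V → Option (Option ℕ))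
    (v : V) (c : ℕ) : Prop :=
  c ∈ K ∧ f v = none ∧ ∀ u, G.Adj v u → f u ≠ some (some c)

/-- Every vertex is coloured or blank. -/
def AllPlayed (f : V → Option (Option ℕ)) : Prop := ∀ v, f v ≠ none

/-- Maker wins the vertex colouring game with blanks from the given position. -/
def MakerWinsB (G : SimpleGraph V) (K : Finset ℕ) :
    ℕ → (V → Option (Option ℕ)) → Bool → Prop
  | 0, f, _ => AllPlayed f
  | fuel + 1, f, true => AllPlayed f ∨
      ∃ v c, BColLegal G K f v c ∧ MakerWinsB G K fuel (update f v (some (some c))) false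
  | fuel + 1, f, false =>
      ((¬ ∃ v c, BColLegal G K f v c) ∧ AllPlayed f) ∨
      ((∃ v c, BColLegal G K f v c) ∧
        (∀ v c, BColLegal G K f v c →
          MakerWinsB G K fuel (update f v (some (some c))) true) ∧
        (∀ v, f v = none → MakerWinsB G K fuel (update f v (some none)) true))

/-- The game chromatic number with blanks `χ_gb(G)`: the least number of colours for
which Maker has a winning strategy in the vertex colouring game with blanks. -/
noncomputable def chiGb (G : SimpleGraph V) : ℕ :=
  sInf {k | MakerWinsB G (Finset.range k) (Fintype.card V) (fun _ => none) true}

/-! ### The game with blanks, with classes marked for blanks.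

The extra datum is the finite set `ds` of currently marked classes.  Maker may also
play blanks at unplayed vertices of marked classes; the game does not end while some
vertex of a marked class is unplayed; and whenever Breaker plays a blank at `v` he may
additionally remove one marked class not containing `v`. -/

/-- `v` belongs to some class marked for blanks. -/
def InMarked (ds : Finset (Finset V)) (v : V) : Prop := ∃ d ∈ ds, v ∈ d

/-- The game has ended: no colour move is available and no vertex of a class marked
for blanks is left unplayed. -/
def MEnded (G : SimpleGraph V) (K : Finset ℕ) (f : V → Option (Option ℕ))
    (ds : Finset (Finset V)) : Prop :=
  (¬ ∃ v c, BColLegal G K f v c) ∧ ∀ v, InMarked ds v → f v ≠ none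

/-- Maker wins the vertex colouring game with blanks, with the classes `ds` marked
for blanks, from the given position. -/
def MakerWinsM (G : SimpleGraph V) (K : Finset ℕ) :
    ℕ → (V → Option (Option ℕ)) → Finset (Finset V) → Bool → Prop
  | 0, f, _, _ => AllPlayed f
  | fuel + 1, f, ds, true =>
      (MEnded G K f ds ∧ AllPlayed f) ∨
      (¬ MEnded G K f ds ∧
        ((∃ v c, BColLegal G K f v c ∧
            MakerWinsM G K fuel (update f v (some (some c))) ds false) ∨
         (∃ v, f v = none ∧ InMarked ds v ∧
            MakerWinsM G K fuel (update f v (some none)) ds false)))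
  | fuel + 1, f, ds, false =>
      (MEnded G K f ds ∧ AllPlayed f) ∨
      (¬ MEnded G K f ds ∧
        (∀ v c, BColLegal G K f v c →
          MakerWinsM G K fuel (update f v (some (some c))) ds true) ∧
        (∀ v, f v = none →
          MakerWinsM G K fuel (update f v (some none)) ds true ∧
          ∀ d ∈ ds, v ∉ d →
            MakerWinsM G K fuel (update f v (some none)) (ds.erase d) true))

/-- `χ_gb(G; D₁,…,Dₛ)`: the least number of colours for which Maker has a winning
strategy in the vertex colouring game with blanks with the classes in `ds` marked for
blanks. -/
noncomputable def chiGbM (G : SimpleGraph V) (ds : Finset (Finset V)) : ℕ :=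
  sInf {k | MakerWinsM G (Finset.range k) (Fintype.card V) (fun _ => none) ds true}

/-! ### Move sequences, for conditioning the game on an initial sequence of plays. -/

/-- A move in the game with blanks: a colour at a vertex, or a blank at a vertex
together with an optional marked class which Breaker removes. -/
inductive BMove (W : Type*) where
  | color (v : W) (c : ℕ)
  | blank (v : W) (removed : Option (Finset W))
  deriving DecidableEq

/-- The vertex at which a move is made. -/
def BMove.vertex {W : Type*} : BMove W → W
  | .color v _ => v
  | .blank v _ => v

/-- The effect of a single move on a position. -/
def bStep (st : (V → Option (Option ℕ)) × Finset (Finset V)) :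
    BMove V → (V → Option (Option ℕ)) × Finset (Finset V)
  | .color v c => (update st.1 v (some (some c)), st.2)
  | .blank v none => (update st.1 v (some none), st.2)
  | .blank v (some d) => (update st.1 v (some none), st.2.erase d)

/-- The position reached after the sequence `P` of moves. -/
def bRun (st : (V → Option (Option ℕ)) × Finset (Finset V)) (P : List (BMove V)) :
    (V → Option (Option ℕ)) × Finset (Finset V) :=
  P.foldl bStep st

/-- `P` is a legal sequence of moves from the given position in the game with blanks
with marked classes (the `Bool` is the player to move, `true` = Maker). -/
def LegalSeqM (G : SimpleGraph V) (K : Finset ℕ) :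
    (V → Option (Option ℕ)) → Finset (Finset V) → Bool → List (BMove V) → Prop
  | _, _, _, [] => True
  | f, ds, true, BMove.color v c :: rest =>
      ¬ MEnded G K f ds ∧ BColLegal G K f v c ∧
        LegalSeqM G K (update f v (some (some c))) ds false rest
  | f, ds, true, BMove.blank v r :: rest =>
      ¬ MEnded G K f ds ∧ f v = none ∧ InMarked ds v ∧ r = none ∧
        LegalSeqM G K (update f v (some none)) ds false rest
  | f, ds, false, BMove.color v c :: rest =>
      ¬ MEnded G K f ds ∧ BColLegal G K f v c ∧
        LegalSeqM G K (update f v (some (some c))) ds true rest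
  | f, ds, false, BMove.blank v none :: rest =>
      ¬ MEnded G K f ds ∧ f v = none ∧
        LegalSeqM G K (update f v (some none)) ds true rest
  | f, ds, false, BMove.blank v (some d) :: rest =>
      ¬ MEnded G K f ds ∧ f v = none ∧ d ∈ ds ∧ v ∉ d ∧
        LegalSeqM G K (update f v (some none)) (ds.erase d) true rest

/-- `χ_gb(G; ds | P)`: the least number of colours for which Maker has a winning
strategy in the vertex colouring game with blanks with the classes `ds` marked for
blanks, conditioned on the game starting with the sequence `P` of moves. -/
noncomputable def chiGbMCond (G : SimpleGraph V) (ds : Finset (Finset V))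
    (P : List (BMove V)) : ℕ :=
  sInf {n | ∃ K : Finset ℕ, K.card = n ∧
    LegalSeqM G K (fun _ => none) ds true P ∧
    MakerWinsM G K (Fintype.card V - P.length) (bRun (fun _ => none, ds) P).1
      (bRun (fun _ => none, ds) P).2 (decide (P.length % 2 = 0))}

/-! ### The marking game. -/

/-- `v` may legally be marked: it is unmarked and has at most `k - 1` marked
neighbours. -/
def MarkLegal (G : SimpleGraph V) (k : ℕ) (M : Set V) (v : V) : Prop :=
  v ∉ M ∧ (M ∩ {u | G.Adj v u}).ncard < k

/-- Maker wins the marking game from the given position. -/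
def MakerWinsMark (G : SimpleGraph V) (k : ℕ) : ℕ → Set V → Bool → Prop
  | 0, M, _ => ∀ v, v ∈ M
  | fuel + 1, M, true => (∀ v, v ∈ M) ∨
      ∃ v, MarkLegal G k M v ∧ MakerWinsMark G k fuel (insert v M) false
  | fuel + 1, M, false => (∀ v, v ∈ M) ∨
      ((∃ v, MarkLegal G k M v) ∧
        ∀ v, MarkLegal G k M v → MakerWinsMark G k fuel (insert v M) true)

/-- The marking number (game colouring number) `m(G)`: the least `k` for which Maker
has a winning strategy in the marking game. -/
noncomputable def markingNumber (G : SimpleGraph V) : ℕ :=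
  sInf {k | MakerWinsMark G k (Fintype.card V) ∅ true}

end GameCol

/-! The last vertex to be marked has all of its neighbours marked, so Maker cannot win with
`k ≤ δ(G)`, i.e. `m(G) > δ(G)` on every nonempty graph; and every vertex of `T(r², r)` has
degree `(r - 1) r`. -/

namespace GameCol

open SimpleGraph

variable {V : Type*} {G : SimpleGraph V} {k : ℕ} {M : Set V} {v : V}

theorem ncard_compl_insert [Finite V] (hv : v ∉ M) : (insert v M)ᶜ.ncard + 1 = Mᶜ.ncard := by
  have : (insert v M)ᶜ = Mᶜ \ {v} := by ext; simp [not_or, and_comm]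
  rw [this, Set.ncard_sdiff_singleton_add_one hv]

section Degree

variable [Fintype V] [DecidableRel G.Adj]

theorem ncard_neighborSet (v : V) : (G.neighborSet v).ncard = G.degree v :=
  Set.ncard_eq_toFinset_card' _

theorem markLegal_of_maxDegree_lt (hk : G.maxDegree < k) (hv : v ∉ M) : MarkLegal G k M v := by
  refine ⟨hv, lt_of_le_of_lt ?_ ((G.degree_le_maxDegree v).trans_lt hk)⟩
  exact ncard_neighborSet (G := G) v ▸ Set.ncard_le_ncard Set.inter_subset_right

theorem not_markLegal_of_le_minDegree (hk : k ≤ G.minDegree) (hM : ∀ u, u ≠ v → u ∈ M) :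
    ¬ MarkLegal G k M v := by
  rintro ⟨-, hlt⟩
  have hN : M ∩ {u | G.Adj v u} = G.neighborSet v :=
    Set.inter_eq_right.2 fun u hu => hM u (G.ne_of_adj hu).symm
  rw [hN, ncard_neighborSet] at hlt
  exact (hk.trans (G.minDegree_le_degree v)).not_gt hlt

theorem compl_insert_nonempty_of_markLegal (hk : k ≤ G.minDegree) (hv : MarkLegal G k M v) :
    (insert v M)ᶜ.Nonempty := by
  refine Set.nonempty_compl.2 fun h => not_markLegal_of_le_minDegree hk (fun u hu => ?_) hv
  exact (h ▸ Set.mem_univ u : u ∈ insert v M).resolve_left hu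

theorem makerWinsMark_of_maxDegree_lt (hk : G.maxDegree < k) :
    ∀ fuel (M : Set V) (b : Bool), Mᶜ.ncard ≤ fuel → MakerWinsMark G k fuel M b
  | 0, M, _, h =>
    Set.eq_univ_iff_forall.1 <| Set.compl_empty_iff.1 <|
      (Set.ncard_eq_zero (Set.toFinite _)).1 (Nat.le_zero.1 h)
  | fuel + 1, M, b, h => by
    by_cases hfull : ∀ v, v ∈ M
    · cases b <;> exact .inl hfull
    obtain ⟨v, hv⟩ := not_forall.1 hfull
    have hnext : ∀ w ∉ M, MakerWinsMark G k fuel (insert w M) (!b) := fun w hw =>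
      makerWinsMark_of_maxDegree_lt hk fuel _ _ (by have := ncard_compl_insert hw; omega)
    cases b
    · exact .inr ⟨⟨v, markLegal_of_maxDegree_lt hk hv⟩, fun w hw => hnext w hw.1⟩
    · exact .inr ⟨v, markLegal_of_maxDegree_lt hk hv, hnext v hv⟩

theorem not_makerWinsMark_of_le_minDegree (hk : k ≤ G.minDegree) :
    ∀ fuel (M : Set V) (b : Bool), Mᶜ.Nonempty → ¬ MakerWinsMark G k fuel M b
  | 0, _, _, ⟨w, hw⟩, hwin => hw (hwin w)
  | _ + 1, _, true, ⟨w, hw⟩, .inl hfull => hw (hfull w)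
  | fuel + 1, _, true, _, .inr ⟨_, hv, hwin⟩ =>
    not_makerWinsMark_of_le_minDegree hk fuel _ _ (compl_insert_nonempty_of_markLegal hk hv) hwin
  | _ + 1, _, false, ⟨w, hw⟩, .inl hfull => hw (hfull w)
  | fuel + 1, _, false, _, .inr ⟨⟨v, hv⟩, hwin⟩ =>
    not_makerWinsMark_of_le_minDegree hk fuel _ _ (compl_insert_nonempty_of_markLegal hk hv)
      (hwin v hv)

theorem minDegree_lt_markingNumber [Nonempty V] (G : SimpleGraph V) [DecidableRel G.Adj] :
    G.minDegree < markingNumber G := by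
  -- `sInf ∅ = 0`, so the lower bound needs some `k` for which Maker wins.
  have hmaker : MakerWinsMark G (G.maxDegree + 1) (Fintype.card V) ∅ true :=
    makerWinsMark_of_maxDegree_lt (Nat.lt_succ_self _) _ _ _ (by simp [Set.ncard_univ])
  refine Nat.lt_of_succ_le (le_csInf ⟨_, hmaker⟩ fun k (hk : MakerWinsMark G k _ ∅ true) => ?_)
  by_contra! h
  exact not_makerWinsMark_of_le_minDegree (Nat.le_of_lt_succ h) _ _ _ (by simp) hk

end Degree

theorem degree_turanGraph_mul (r t : ℕ) (v : Fin (r * t)) :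
    (turanGraph (r * t) r).degree v = (r - 1) * t := by
  let e := completeEquipartiteGraph.turanGraph (r := r) (t := t)
  rw [← e.apply_symm_apply v, e.degree_eq, degree_completeEquipartiteGraph]

/-- For every `r ≥ 1`, the marking number of the Turán graph
`T(r²,r)` is at least `r(r−1)`. -/
theorem markingNumber_turan_ge (r : ℕ) (hr : 1 ≤ r) :
    r * (r - 1) ≤ markingNumber (SimpleGraph.turanGraph (r ^ 2) r) := by
  rw [sq]
  have : Nonempty (Fin (r * r)) := ⟨⟨0, Nat.mul_pos hr hr⟩⟩
  calc r * (r - 1) = (r - 1) * r := Nat.mul_comm _ _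
    _ ≤ (turanGraph (r * r) r).minDegree :=
      le_minDegree_of_forall_le_degree _ _ fun v => (degree_turanGraph_mul r r v).ge
    _ ≤ markingNumber (turanGraph (r * r) r) := (minDegree_lt_markingNumber _).le

end GameCol
end

section
/- Let G be the six-vertex graph formed by the disjoint union of a four-cycle with a pendant edge attached and an isolated vertex. Then χ_gb(G) = 3 and χ_g(G) = 2; in particular, allowing Breaker to play blanks can strictly increase the number of colours Maker needs. -/
open Function

namespace GameCol

variable {V : Type*} [Fintype V] [DecidableEq V]

/-!
Without blanks, Maker wins with two colours by colouring the isolated vertex first: Breaker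
then has to open the game on the four-cycle with its pendant edge, where the second player
can always answer. A blank lets Breaker pass, so he can hand the first move on that component
back to Maker, and every opening move there is refuted with two colours; three colours
suffice. Both games are finite, so these facts are checked by exhaustive search of the game
trees.
-/

theorem sInf_setOf_eq_of_forall_lt {p : ℕ → Prop} {n : ℕ} (hn : p n) (hlt : ∀ m < n, ¬ p m) :
    sInf {m | p m} = n :=
  IsLeast.csInf_eq ⟨hn, fun _ hm => not_lt.1 fun h => hlt _ h hm⟩

section Decidability

variable {G : SimpleGraph V} [DecidableRel G.Adj] {v : V} {c : ℕ}

section WithoutBlanks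

variable {k : ℕ} {f : V → Option ℕ}

instance : Decidable (ColLegal G k f v c) := inferInstanceAs (Decidable (_ ∧ _ ∧ _))

instance : Decidable (FullC f) := inferInstanceAs (Decidable (∀ _, _))

instance : Decidable (∃ c, ColLegal G k f v c) :=
  decidable_of_iff (∃ c < k, ColLegal G k f v c)
    ⟨fun ⟨c, _, h⟩ => ⟨c, h⟩, fun ⟨c, h⟩ => ⟨c, h.1, h⟩⟩

instance {P : ℕ → Prop} [DecidablePred P] : Decidable (∃ c, ColLegal G k f v c ∧ P c) :=
  decidable_of_iff (∃ c < k, ColLegal G k f v c ∧ P c)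
    ⟨fun ⟨c, _, h⟩ => ⟨c, h⟩, fun ⟨c, h⟩ => ⟨c, h.1.1, h⟩⟩

instance {P : ℕ → Prop} [DecidablePred P] : Decidable (∀ c, ColLegal G k f v c → P c) :=
  decidable_of_iff (∀ c < k, ColLegal G k f v c → P c)
    ⟨fun h c hc => h c hc.1 hc, fun h c _ hc => h c hc⟩

instance decidableMakerWinsC : ∀ n f b, Decidable (MakerWinsC G k n f b)
  | 0, _, _ => inferInstanceAs (Decidable (FullC _))
  | n + 1, _, true => by haveI := @decidableMakerWinsC n; unfold MakerWinsC; infer_instance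
  | n + 1, _, false => by haveI := @decidableMakerWinsC n; unfold MakerWinsC; infer_instance

end WithoutBlanks

section WithBlanks

variable {K : Finset ℕ} {f : V → Option (Option ℕ)}

instance : Decidable (BColLegal G K f v c) := inferInstanceAs (Decidable (_ ∧ _ ∧ _))

instance : Decidable (AllPlayed f) := inferInstanceAs (Decidable (∀ _, _))

instance : Decidable (∃ c, BColLegal G K f v c) :=
  decidable_of_iff (∃ c ∈ K, BColLegal G K f v c)
    ⟨fun ⟨c, _, h⟩ => ⟨c, h⟩, fun ⟨c, h⟩ => ⟨c, h.1, h⟩⟩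

instance {P : ℕ → Prop} [DecidablePred P] : Decidable (∃ c, BColLegal G K f v c ∧ P c) :=
  decidable_of_iff (∃ c ∈ K, BColLegal G K f v c ∧ P c)
    ⟨fun ⟨c, _, h⟩ => ⟨c, h⟩, fun ⟨c, h⟩ => ⟨c, h.1.1, h⟩⟩

instance {P : ℕ → Prop} [DecidablePred P] : Decidable (∀ c, BColLegal G K f v c → P c) :=
  decidable_of_iff (∀ c ∈ K, BColLegal G K f v c → P c)
    ⟨fun h c hc => h c hc.1 hc, fun h c _ hc => h c hc⟩

instance decidableMakerWinsB : ∀ n f b, Decidable (MakerWinsB G K n f b)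
  | 0, _, _ => inferInstanceAs (Decidable (AllPlayed _))
  | n + 1, _, true => by haveI := @decidableMakerWinsB n; unfold MakerWinsB; infer_instance
  | n + 1, _, false => by haveI := @decidableMakerWinsB n; unfold MakerWinsB; infer_instance

end WithBlanks

end Decidability

def squareWithPendantAndIsolated : SimpleGraph (Fin 6) :=
  SimpleGraph.fromEdgeSet {s(0, 1), s(1, 2), s(2, 3), s(3, 0), s(0, 4)}

namespace squareWithPendantAndIsolated

instance : DecidableRel squareWithPendantAndIsolated.Adj := by
  unfold squareWithPendantAndIsolated; infer_instance

set_option maxRecDepth 100000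

theorem makerWinsB_three :
    MakerWinsB squareWithPendantAndIsolated (Finset.range 3) 6 (fun _ => none) true := by
  decide

theorem not_makerWinsB_of_lt_three :
    ∀ k < 3,
      ¬ MakerWinsB squareWithPendantAndIsolated (Finset.range k) 6 (fun _ => none) true := by
  decide

theorem makerWinsC_two : MakerWinsC squareWithPendantAndIsolated 2 6 (fun _ => none) true := by
  decide

theorem not_makerWinsC_of_lt_two :
    ∀ k < 2, ¬ MakerWinsC squareWithPendantAndIsolated k 6 (fun _ => none) true := by
  decide

end squareWithPendantAndIsolated

/-- For the six-vertex graph `G` consisting of a four-cycle with a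
pendant edge, together with an isolated vertex, we have `χ_gb(G) = 3` and
`χ_g(G) = 2`; in particular allowing Breaker to play blanks can strictly increase the
number of colours Maker needs. -/
theorem chiGb_eq_three_and_gameChromatic_eq_two :
    chiGb (SimpleGraph.fromEdgeSet
        {s((0 : Fin 6), (1 : Fin 6)), s((1 : Fin 6), (2 : Fin 6)),
         s((2 : Fin 6), (3 : Fin 6)), s((3 : Fin 6), (0 : Fin 6)),
         s((0 : Fin 6), (4 : Fin 6))}) = 3 ∧
    gameChromaticNumber (SimpleGraph.fromEdgeSet
        {s((0 : Fin 6), (1 : Fin 6)), s((1 : Fin 6), (2 : Fin 6)),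
         s((2 : Fin 6), (3 : Fin 6)), s((3 : Fin 6), (0 : Fin 6)),
         s((0 : Fin 6), (4 : Fin 6))}) = 2 := by
  change chiGb squareWithPendantAndIsolated = 3 ∧
    gameChromaticNumber squareWithPendantAndIsolated = 2
  rw [chiGb, gameChromaticNumber, Fintype.card_fin]
  open squareWithPendantAndIsolated in
  exact ⟨sInf_setOf_eq_of_forall_lt makerWinsB_three not_makerWinsB_of_lt_three,
    sInf_setOf_eq_of_forall_lt makerWinsC_two not_makerWinsC_of_lt_two⟩

end GameCol
end
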